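/- arXiv:2404.18463 — 3 statements merged into one kernel-verified Lean document; each statement's English description precedes it below -/
import Mathlib

section
/- Let u, v, p : ℕ → [0,∞) × [0,∞) × [0,1] be the sequences generated by the one-dimensional semi-implicit scheme with homogeneous Dirichlet data and nonnegative initial data with u_j^0 ≤ C_u, v_j^0 ≤ C_v, p_j^0 ∈ [0,1]. Then for every n and every interior index j, 0 ≤ u_j^n ≤ C_u, 0 ≤ v_j^n ≤ C_v, and 0 ≤ p_j^n ≤ 1. -/
/-- Discrete maximum principle for the implicit tridiagonal step with
    homogeneous Dirichlet boundary data. -/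
lemma dmp (N : ℕ) (hN : 2 ≤ N) (D C : ℝ) (hD : 0 < D) (hC : 0 ≤ C)
    (w a g : ℕ → ℝ)
    (ha : ∀ j, 1 ≤ j → j ≤ N - 1 → 0 ≤ a j)
    (hg : ∀ j, 1 ≤ j → j ≤ N - 1 → 0 ≤ g j ∧ g j ≤ C)
    (hb0 : w 0 = 0) (hbN : w N = 0)
    (heq : ∀ j, 1 ≤ j → j ≤ N - 1 →
      (1 + a j + 2 * D) * w j - D * (w (j + 1) + w (j - 1)) = g j) :
    ∀ j, j ≤ N → 0 ≤ w j ∧ w j ≤ C := by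
  have hmin : ∀ j, j ≤ N → 0 ≤ w j := by
    obtain ⟨j₀, hj₀mem, hj₀min⟩ :=
      (Finset.range (N + 1)).exists_min_image w ⟨0, by simp⟩
    have hj₀ : j₀ ≤ N := by
      have := Finset.mem_range.mp hj₀mem; omega
    have key : 0 ≤ w j₀ := by
      rcases eq_or_ne j₀ 0 with h0 | h0
      · simp [h0, hb0]
      rcases eq_or_ne j₀ N with hn | hn
      · simp [hn, hbN]
      have h1 : 1 ≤ j₀ := Nat.one_le_iff_ne_zero.mpr h0
      have h2 : j₀ ≤ N - 1 := by omega
      have e := heq j₀ h1 h2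
      have hg' := (hg j₀ h1 h2).1
      have hp1 : w j₀ ≤ w (j₀ + 1) := hj₀min _ (Finset.mem_range.mpr (by omega))
      have hm1 : w j₀ ≤ w (j₀ - 1) := hj₀min _ (Finset.mem_range.mpr (by omega))
      have ha' := ha j₀ h1 h2
      by_contra hlt
      push_neg at hlt
      nlinarith [mul_nonneg hD.le (sub_nonneg.mpr hp1),
        mul_nonneg hD.le (sub_nonneg.mpr hm1),
        mul_nonpos_of_nonneg_of_nonpos ha' hlt.le]
    intro j hj
    exact le_trans key (hj₀min _ (Finset.mem_range.mpr (by omega)))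
  have hmax : ∀ j, j ≤ N → w j ≤ C := by
    obtain ⟨j₀, hj₀mem, hj₀max⟩ :=
      (Finset.range (N + 1)).exists_max_image w ⟨0, by simp⟩
    have hj₀ : j₀ ≤ N := by
      have := Finset.mem_range.mp hj₀mem; omega
    have key : w j₀ ≤ C := by
      rcases eq_or_ne j₀ 0 with h0 | h0
      · simpa [h0, hb0] using hC
      rcases eq_or_ne j₀ N with hn | hn
      · simpa [hn, hbN] using hC
      have h1 : 1 ≤ j₀ := Nat.one_le_iff_ne_zero.mpr h0
      have h2 : j₀ ≤ N - 1 := by omega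
      have e := heq j₀ h1 h2
      have hg' := (hg j₀ h1 h2).2
      have hp1 : w (j₀ + 1) ≤ w j₀ := hj₀max _ (Finset.mem_range.mpr (by omega))
      have hm1 : w (j₀ - 1) ≤ w j₀ := hj₀max _ (Finset.mem_range.mpr (by omega))
      have ha' := ha j₀ h1 h2
      have hw0 := hmin j₀ hj₀
      nlinarith [mul_nonneg hD.le (sub_nonneg.mpr hp1),
        mul_nonneg hD.le (sub_nonneg.mpr hm1),
        mul_nonneg ha' hw0]
    intro j hj
    exact le_trans (hj₀max _ (Finset.mem_range.mpr (by omega))) key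
  exact fun j hj => ⟨hmin j hj, hmax j hj⟩

theorem stmt_3 (N : ℕ) (τ h ε lam d₁ d₂ Cu Cv : ℝ)
    (hN : 2 ≤ N) (hτ : 0 < τ) (hh : 0 < h) (hε : 0 < ε)
    (hlam : 0 < lam) (hd₁ : 0 < d₁) (hd₂ : 0 < d₂)
    (u v p : ℕ → ℕ → ℝ)
    -- nonnegative, bounded initial data
    (hu0 : ∀ j, j ≤ N → 0 ≤ u 0 j ∧ u 0 j ≤ Cu)
    (hv0 : ∀ j, j ≤ N → 0 ≤ v 0 j ∧ v 0 j ≤ Cv)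
    (hp0 : ∀ j, j ≤ N → 0 ≤ p 0 j ∧ p 0 j ≤ 1)
    -- homogeneous Dirichlet boundary data for u and v
    (hbu : ∀ n, u n 0 = 0 ∧ u n N = 0)
    (hbv : ∀ n, v n 0 = 0 ∧ v n N = 0)
    -- the fully discrete semi-implicit scheme in the interior
    (hp : ∀ n j, j ≤ N →
      p (n + 1) j = (p n j + (τ / ε) * u n j) / (1 + (τ / ε) * (u n j + v n j)))
    (hu : ∀ n j, 1 ≤ j → j ≤ N - 1 →
      (1 + (τ / ε) * (v n j + lam * (1 - p (n + 1) j)) + 2 * d₁ * τ / h ^ 2) * u (n + 1) j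
        - (d₁ * τ / h ^ 2) * (u (n + 1) (j + 1) + u (n + 1) (j - 1)) = u n j)
    (hv : ∀ n j, 1 ≤ j → j ≤ N - 1 →
      (1 + (τ / ε) * (u (n + 1) j + lam * p (n + 1) j) + 2 * d₂ * τ / h ^ 2) * v (n + 1) j
        - (d₂ * τ / h ^ 2) * (v (n + 1) (j + 1) + v (n + 1) (j - 1)) = v n j) :
    ∀ n j, 1 ≤ j → j ≤ N - 1 →
      (0 ≤ u n j ∧ u n j ≤ Cu) ∧ (0 ≤ v n j ∧ v n j ≤ Cv) ∧ (0 ≤ p n j ∧ p n j ≤ 1) := by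
  have hk : 0 < τ / ε := div_pos hτ hε
  have hCu : 0 ≤ Cu := le_trans (hu0 1 (by omega)).1 (hu0 1 (by omega)).2
  have hCv : 0 ≤ Cv := le_trans (hv0 1 (by omega)).1 (hv0 1 (by omega)).2
  have hD₁ : 0 < d₁ * τ / h ^ 2 := div_pos (mul_pos hd₁ hτ) (pow_pos hh 2)
  have hD₂ : 0 < d₂ * τ / h ^ 2 := div_pos (mul_pos hd₂ hτ) (pow_pos hh 2)
  have main : ∀ n j, j ≤ N →
      (0 ≤ u n j ∧ u n j ≤ Cu) ∧ (0 ≤ v n j ∧ v n j ≤ Cv) ∧ (0 ≤ p n j ∧ p n j ≤ 1) := by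
    intro n
    induction n with
    | zero => exact fun j hj => ⟨hu0 j hj, hv0 j hj, hp0 j hj⟩
    | succ n ih =>
      -- bounds on p at step n+1, for all j ≤ N
      have hpn1 : ∀ j, j ≤ N → 0 ≤ p (n + 1) j ∧ p (n + 1) j ≤ 1 := by
        intro j hj
        obtain ⟨⟨hun, _⟩, ⟨hvn, _⟩, hpn, hpn'⟩ := ih j hj
        have hden : (0:ℝ) < 1 + (τ / ε) * (u n j + v n j) := by
          have : 0 ≤ (τ / ε) * (u n j + v n j) :=
            mul_nonneg hk.le (by linarith)
          linarith
        rw [hp n j hj]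
        constructor
        · exact div_nonneg (by nlinarith [mul_nonneg hk.le hun]) hden.le
        · rw [div_le_one hden]
          nlinarith [mul_nonneg hk.le hvn]
      -- bounds on u at step n+1 via the discrete maximum principle
      have hun1 : ∀ j, j ≤ N → 0 ≤ u (n + 1) j ∧ u (n + 1) j ≤ Cu := by
        refine dmp N hN (d₁ * τ / h ^ 2) Cu hD₁ hCu (u (n + 1))
          (fun j => (τ / ε) * (v n j + lam * (1 - p (n + 1) j))) (u n)
          ?_ ?_ (hbu (n + 1)).1 (hbu (n + 1)).2 ?_
        · intro j h1 h2
          have hvn := (ih j (by omega)).2.1.1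
          have hp1 := (hpn1 j (by omega)).2
          exact mul_nonneg hk.le (by nlinarith)
        · intro j h1 h2
          exact (ih j (by omega)).1
        · intro j h1 h2
          linear_combination hu n j h1 h2
      -- bounds on v at step n+1
      have hvn1 : ∀ j, j ≤ N → 0 ≤ v (n + 1) j ∧ v (n + 1) j ≤ Cv := by
        refine dmp N hN (d₂ * τ / h ^ 2) Cv hD₂ hCv (v (n + 1))
          (fun j => (τ / ε) * (u (n + 1) j + lam * p (n + 1) j)) (v n)
          ?_ ?_ (hbv (n + 1)).1 (hbv (n + 1)).2 ?_
        · intro j h1 h2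
          have hun := (hun1 j (by omega)).1
          have hp0' := (hpn1 j (by omega)).1
          exact mul_nonneg hk.le (by nlinarith)
        · intro j h1 h2
          exact (ih j (by omega)).2.1
        · intro j h1 h2
          linear_combination hv n j h1 h2
      exact fun j hj => ⟨hun1 j hj, hvn1 j hj, hpn1 j hj⟩
  exact fun n j h1 h2 => main n j (by omega)
end

section
/- Suppose u^n, u^{n+1} ∈ H¹(ℝ^d) with Δu^{n+1} defined, and u^{n+1} - u^n - d₁τΔu^{n+1} = -(τ/ε) u^{n+1} g where g ≥ 0 pointwise, d₁, τ, ε > 0. Then ‖u^{n+1}‖_{L²} ≤ ‖u^n‖_{L²}. -/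
open MeasureTheory

noncomputable def discreteLaplacian {d : ℕ} (f : EuclideanSpace ℝ (Fin d) → ℝ)
    (x : EuclideanSpace ℝ (Fin d)) : ℝ :=
  ∑ i : Fin d,
    fderiv ℝ (fun y => fderiv ℝ f y (EuclideanSpace.single i (1 : ℝ))) x
      (EuclideanSpace.single i (1 : ℝ))

section Aux

open Set Filter
open scoped ENNReal NNReal Topology

/-- Product of two L² functions is integrable. -/
lemma aux_memL2_mul_integrable {α : Type*} [MeasurableSpace α] {μ : Measure α} {f g : α → ℝ}
    (hf : MemLp f 2 μ) (hg : MemLp g 2 μ) : Integrable (fun x => f x * g x) μ := by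
  have h := L2.integrable_inner (𝕜 := ℝ) (hf.toLp f) (hg.toLp g)
  refine h.congr ?_
  filter_upwards [hf.coeFn_toLp, hg.coeFn_toLp] with x hx hy
  simp [hx, hy, RCLike.inner_apply]
  ring

lemma core_div {n : ℕ} (F : Fin n → (Fin n → ℝ) → ℝ) (ψ : (Fin n → ℝ) → ℝ)
    (hF : ∀ i, ContDiff ℝ 1 (F i)) (hFi : ∀ i, Integrable (F i))
    (hψ : Integrable ψ)
    (hle : ∀ x, ψ x ≤ ∑ i, fderiv ℝ (F i) x (Pi.single i 1)) :
    ∫ x, ψ x ≤ 0 := by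
  match n with
  | 0 =>
    have h0 : ∀ x, ψ x ≤ 0 := by intro x; simpa using hle x
    exact integral_nonpos h0
  | (m+1) =>
    have hdiffF : ∀ i, Differentiable ℝ (F i) := fun i => (hF i).differentiable one_ne_zero
    set dV : (Fin (m+1) → ℝ) → ℝ := fun x => ∑ i, fderiv ℝ (F i) x (Pi.single i 1) with hdV
    have hdVcont : Continuous dV := by
      apply continuous_finset_sum
      intro i _
      exact ((hF i).continuous_fderiv one_ne_zero).clm_apply continuous_const
    have hFmeas : ∀ i, Measurable (F i) := fun i => (hF i).continuous.measurable
    set G : Fin (m+1) → ℝ → ℝ≥0∞ :=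
      fun i t => ∫⁻ y : Fin m → ℝ, (‖F i (Fin.insertNth i t y)‖₊ : ℝ≥0∞) with hG
    have hins : ∀ i : Fin (m+1), (fun p : ℝ × (Fin m → ℝ) => Fin.insertNth i p.1 p.2)
        = ⇑(MeasurableEquiv.piFinSuccAbove (fun _ => ℝ) i).symm := by
      intro i
      rw [MeasurableEquiv.piFinSuccAbove_symm_apply]
      ext p : 1
      simp [Fin.insertNthEquiv]
    have hmeas2 : ∀ i, Measurable
        (fun p : ℝ × (Fin m → ℝ) => (‖F i (Fin.insertNth i p.1 p.2)‖₊ : ℝ≥0∞)) := by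
      intro i
      apply Measurable.coe_nnreal_ennreal
      apply Measurable.nnnorm
      apply (hFmeas i).comp
      rw [hins i]
      exact (MeasurableEquiv.piFinSuccAbove _ i).symm.measurable
    have hGmeas : ∀ i, Measurable (G i) := fun i =>
      Measurable.lintegral_prod_right (f := fun t y => (‖F i (Fin.insertNth i t y)‖₊ : ℝ≥0∞))
        (hmeas2 i)
    have hGlint : ∀ i, ∫⁻ t, G i t = ∫⁻ x, (‖F i x‖₊ : ℝ≥0∞) := by
      intro i
      have hmp := (measurePreserving_piFinSuccAbove
        (fun _ : Fin (m+1) => (volume : Measure ℝ)) i).symm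
      have hcomp := hmp.lintegral_comp (f := fun x => (‖F i x‖₊ : ℝ≥0∞))
        ((hFmeas i).nnnorm.coe_nnreal_ennreal)
      have hprod : ∫⁻ p : ℝ × (Fin m → ℝ),
          (‖F i ((MeasurableEquiv.piFinSuccAbove (fun _ => ℝ) i).symm p)‖₊ : ℝ≥0∞)
            ∂((volume : Measure ℝ).prod (Measure.pi fun _ => (volume : Measure ℝ)))
          = ∫⁻ t, G i t := by
        rw [lintegral_prod _ (by rw [← hins i] at *; exact ((hmeas2 i).aemeasurable)) ]
        rw [← volume_pi]
        have hpt : ∀ p : ℝ × (Fin m → ℝ),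
            (MeasurableEquiv.piFinSuccAbove (fun _ => ℝ) i).symm p = Fin.insertNth i p.1 p.2 :=
          fun p => (congrFun (hins i) p).symm
        simp only [hpt]
        rfl
      rw [← hprod]
      rw [show ((volume : Measure ℝ).prod (Measure.pi fun _ => (volume : Measure ℝ)))
        = ((fun _ : Fin (m+1) => (volume : Measure ℝ)) i).prod
            (Measure.pi fun j => (fun _ : Fin (m+1) => (volume : Measure ℝ)) (i.succAbove j)) from rfl]
      rw [hcomp]
      rw [volume_pi]
    have hGfin : ∀ i, ∫⁻ t, G i t ≠ ⊤ := by
      intro i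
      rw [hGlint i]
      exact (hFi i).2.ne
    set H : ℝ → ℝ≥0∞ := fun t => ∑ i, (G i t + G i (-t)) with hH
    have hHmeas : Measurable H := by
      apply Finset.measurable_sum
      intro i _
      exact (hGmeas i).add ((hGmeas i).comp measurable_neg)
    have hHlint : ∫⁻ t, H t ≠ ⊤ := by
      have hsum := lintegral_finset_sum (μ := (volume : Measure ℝ)) Finset.univ
        (f := fun (i : Fin (m+1)) (t : ℝ) => G i t + G i (-t))
        (fun i _ => (hGmeas i).add ((hGmeas i).comp measurable_neg))
      rw [show (fun t => H t) = fun t => ∑ i, (G i t + G i (-t)) from rfl, hsum]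
      apply (ENNReal.sum_lt_top.mpr ?_).ne
      intro i _
      rw [lintegral_add_left (hGmeas i)]
      have hneg : ∫⁻ t, G i (-t) = ∫⁻ t, G i t :=
        (Measure.measurePreserving_neg (volume : Measure ℝ)).lintegral_comp
          (f := G i) (hGmeas i)
      rw [hneg]
      exact ENNReal.add_lt_top.mpr ⟨(hGfin i).lt_top, (hGfin i).lt_top⟩
    have hkey : ∀ T : ℝ, ∀ δ : ℝ≥0∞, 0 < δ → ∃ t, T ≤ t ∧ 0 ≤ t ∧ H t < δ := by
      intro T δ hδ
      by_contra hcon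
      push_neg at hcon
      have hlow : ∀ t ∈ Ici (max T 0), δ ≤ H t := fun t ht =>
        hcon t (le_trans (le_max_left _ _) ht) (le_trans (le_max_right _ _) ht)
      have h1 : δ * volume (Ici (max T 0)) ≤ ∫⁻ t in Ici (max T 0), H t := by
        rw [← setLIntegral_const]
        exact setLIntegral_mono hHmeas hlow
      rw [Real.volume_Ici, ENNReal.mul_top hδ.ne'] at h1
      exact hHlint (top_le_iff.mp (h1.trans (setLIntegral_le_lintegral _ _)))
    set B : ℝ → Set (Fin (m+1) → ℝ) := fun t => Icc (fun _ => -t) (fun _ => t) with hB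
    have hBmeas : ∀ t, MeasurableSet (B t) := fun t => measurableSet_Icc
    have hBsub : ∀ {s t : ℝ}, s ≤ t → B s ⊆ B t := by
      intro s t hst
      apply Icc_subset_Icc <;> intro i <;> simp only <;> linarith
    have hmono : Monotone (fun k : ℕ => B k) := fun a b hab => hBsub (by exact_mod_cast hab)
    have hunion : ⋃ k : ℕ, B (k : ℝ) = univ := by
      ext x
      simp only [mem_iUnion, mem_univ, iff_true]
      obtain ⟨k, hk⟩ := exists_nat_ge ‖x‖
      have h1 : ∀ i, -(k:ℝ) ≤ x i ∧ x i ≤ k := by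
        intro i
        have : |x i| ≤ (k:ℝ) :=
          le_trans (by simpa [Real.norm_eq_abs] using norm_le_pi_norm x i) hk
        exact abs_le.mp this
      exact ⟨k, by
        simp only [hB, mem_Icc]
        exact ⟨fun i => (h1 i).1, fun i => (h1 i).2⟩⟩
    have htendA : Tendsto (fun k : ℕ => ∫ x in B (k:ℝ), |ψ x|) atTop (𝓝 (∫ x, |ψ x|)) := by
      have := tendsto_setIntegral_of_monotone (fun k : ℕ => hBmeas (k:ℝ)) hmono
        (by rw [hunion]; exact hψ.abs.integrableOn)
      rwa [hunion, setIntegral_univ] at this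
    refine le_of_forall_pos_le_add fun ε hε => ?_
    obtain ⟨N, hN⟩ := (htendA.eventually
      (eventually_gt_nhds (show (∫ x, |ψ x|) - ε/2 < ∫ x, |ψ x| by linarith))).exists
    have hcomplN : ∫ x in (B (N:ℝ))ᶜ, |ψ x| < ε/2 := by
      have h2 := integral_add_compl (hBmeas (N:ℝ)) hψ.abs
      linarith
    obtain ⟨t, htN, ht0, htH⟩ := hkey (N:ℝ) (ENNReal.ofReal (ε/2))
      (by simp [ENNReal.ofReal_pos]; linarith)
    -- finiteness of face integrals at t
    have hfinGt : ∀ i : Fin (m+1), G i t + G i (-t) ≠ ⊤ := by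
      intro i
      have hle1 : G i t + G i (-t) ≤ H t :=
        Finset.single_le_sum (f := fun i => G i t + G i (-t))
          (fun _ _ => zero_le) (Finset.mem_univ i)
      exact (hle1.trans_lt (htH.trans_le le_top)).ne
    -- divergence theorem on the box B t
    have habt : (fun _ : Fin (m+1) => -t) ≤ (fun _ : Fin (m+1) => t) := fun i => by
      simp only; linarith
    have hdVint : IntegrableOn dV (Icc (fun _ : Fin (m+1) => -t) (fun _ => t)) := by
      exact hdVcont.continuousOn.integrableOn_compact isCompact_Icc
    have hdivthm := integral_divergence_of_hasFDerivAt_off_countable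
      (fun _ : Fin (m+1) => -t) (fun _ => t) habt (fun x i => F i x)
      (fun x => ContinuousLinearMap.pi fun i => fderiv ℝ (F i) x) ∅ countable_empty
      (continuous_pi fun i => (hF i).continuous).continuousOn
      (fun x _ => hasFDerivAt_pi.2 (fun i => ((hdiffF i) x).hasFDerivAt))
      (by simpa using hdVint)
    have hdiv2 : ∫ x in B t, dV x = ∑ i : Fin (m+1),
        ((∫ y in Icc ((fun _ : Fin (m+1) => -t) ∘ i.succAbove) ((fun _ : Fin (m+1) => t) ∘ i.succAbove),
            F i (i.insertNth t y)) -
         ∫ y in Icc ((fun _ : Fin (m+1) => -t) ∘ i.succAbove) ((fun _ : Fin (m+1) => t) ∘ i.succAbove),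
            F i (i.insertNth (-t) y)) := by
      simpa using hdivthm
    have hbound : ∀ (i : Fin (m+1)) (c : ℝ), G i c ≠ ⊤ →
        ‖∫ y in Icc ((fun _ : Fin (m+1) => -t) ∘ i.succAbove) ((fun _ : Fin (m+1) => t) ∘ i.succAbove),
            F i (i.insertNth c y)‖ ≤ (G i c).toReal := by
      intro i c hc
      refine (norm_integral_le_lintegral_norm _).trans ?_
      apply ENNReal.toReal_mono hc
      refine (setLIntegral_le_lintegral _ _).trans ?_
      simp only [hG, ofReal_norm, enorm_eq_nnnorm]
      exact le_rfl
    have hfaces : (∑ i : Fin (m+1),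
        ((∫ y in Icc ((fun _ : Fin (m+1) => -t) ∘ i.succAbove) ((fun _ : Fin (m+1) => t) ∘ i.succAbove),
            F i (i.insertNth t y)) -
         ∫ y in Icc ((fun _ : Fin (m+1) => -t) ∘ i.succAbove) ((fun _ : Fin (m+1) => t) ∘ i.succAbove),
            F i (i.insertNth (-t) y))) ≤ ε/2 := by
      have hterm : ∀ i : Fin (m+1),
          ((∫ y in Icc ((fun _ : Fin (m+1) => -t) ∘ i.succAbove) ((fun _ : Fin (m+1) => t) ∘ i.succAbove),
              F i (i.insertNth t y)) -
           ∫ y in Icc ((fun _ : Fin (m+1) => -t) ∘ i.succAbove) ((fun _ : Fin (m+1) => t) ∘ i.succAbove),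
              F i (i.insertNth (-t) y)) ≤ (G i t + G i (-t)).toReal := by
        intro i
        have h1 : G i t ≠ ⊤ := by
          intro h; exact (hfinGt i) (by simp [h])
        have h2 : G i (-t) ≠ ⊤ := by
          intro h; exact (hfinGt i) (by simp [h])
        have b1 := hbound i t h1
        have b2 := hbound i (-t) h2
        rw [ENNReal.toReal_add h1 h2]
        have e1 := le_trans (le_abs_self _) b1
        have e2 := le_trans (neg_le_abs _) b2
        rw [Real.norm_eq_abs] at b1 b2
        have := abs_le.mp b1
        have := abs_le.mp b2
        linarith [(abs_le.mp b1).2, (abs_le.mp b2).1]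
      refine (Finset.sum_le_sum (fun i _ => hterm i)).trans ?_
      rw [← ENNReal.toReal_sum (fun i _ => hfinGt i)]
      have hHt : (H t).toReal ≤ ε/2 := by
        have h1 := ENNReal.toReal_mono ENNReal.ofReal_ne_top htH.le
        rwa [ENNReal.toReal_ofReal (by linarith : (0:ℝ) ≤ ε/2)] at h1
      exact hHt
    have hc1 : ∫ x in B t, ψ x ≤ ∫ x in B t, dV x :=
      setIntegral_mono_on hψ.integrableOn hdVint (hBmeas t) (fun x _ => hle x)
    have hc2 : ∫ x in (B t)ᶜ, ψ x ≤ ∫ x in (B (N:ℝ))ᶜ, |ψ x| := by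
      refine le_trans (setIntegral_mono hψ.integrableOn hψ.abs.integrableOn
        (fun x => le_abs_self _)) ?_
      refine setIntegral_mono_set hψ.abs.integrableOn
        (Filter.Eventually.of_forall (fun x => abs_nonneg _))
        (HasSubset.Subset.eventuallyLE ?_)
      exact compl_subset_compl.mpr (hBsub htN)
    have hsplit := integral_add_compl (hBmeas t) hψ
    calc ∫ x, ψ x = (∫ x in B t, ψ x) + ∫ x in (B t)ᶜ, ψ x := hsplit.symm
      _ ≤ (∫ x in B t, dV x) + ∫ x in (B (N:ℝ))ᶜ, |ψ x| := add_le_add hc1 hc2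
      _ ≤ ε/2 + ε/2 := by rw [hdiv2]; exact add_le_add hfaces hcomplN.le
      _ = 0 + ε := by ring


end Aux

theorem stmt_6 {d : ℕ} (d₁ τ ε : ℝ) (hd₁ : 0 < d₁) (hτ : 0 < τ) (hε : 0 < ε)
    (u₀ u₁ g : EuclideanSpace ℝ (Fin d) → ℝ)
    (hsmooth : ContDiff ℝ 2 u₁)
    -- u₀, u₁ ∈ H¹ : the functions and the gradient of u₁ are square integrable
    (hu₀L2 : MemLp u₀ 2 volume) (hu₁L2 : MemLp u₁ 2 volume)
    (hgrad : ∀ i : Fin d,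
      MemLp (fun x => fderiv ℝ u₁ x (EuclideanSpace.single i (1 : ℝ))) 2 volume)
    (hg : ∀ x, 0 ≤ g x)
    (hscheme : ∀ x, u₁ x - u₀ x - d₁ * τ * discreteLaplacian u₁ x
      = -(τ / ε) * (u₁ x * g x)) :
    eLpNorm u₁ 2 volume ≤ eLpNorm u₀ 2 volume := by
  classical
  set e := EuclideanSpace.equiv (Fin d) ℝ with he
  set D : Fin d → EuclideanSpace ℝ (Fin d) → ℝ :=
    fun i y => fderiv ℝ u₁ y (EuclideanSpace.single i (1:ℝ)) with hD
  have hDcd : ∀ i, ContDiff ℝ 1 (D i) := fun i =>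
    (hsmooth.fderiv_right (by norm_num)).clm_apply contDiff_const
  have hu₁diff : Differentiable ℝ u₁ := hsmooth.differentiable (by norm_num)
  -- measure preserving transfer to the pi world
  have hmp : MeasurePreserving (⇑(MeasurableEquiv.toLp 2 (Fin d → ℝ)))
      (volume : Measure (Fin d → ℝ)) (volume : Measure (EuclideanSpace ℝ (Fin d))) :=
    (EuclideanSpace.volume_preserving_symm_measurableEquiv_toLp (Fin d)).symm
  have hemb : MeasurableEmbedding (⇑(MeasurableEquiv.toLp 2 (Fin d → ℝ))) :=
    (MeasurableEquiv.toLp 2 (Fin d → ℝ)).measurableEmbedding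
  have hcoe : ⇑(MeasurableEquiv.toLp 2 (Fin d → ℝ)) = ⇑e.symm := rfl
  have htransInt : ∀ h : EuclideanSpace ℝ (Fin d) → ℝ,
      Integrable h volume → Integrable (h ∘ ⇑e.symm) volume := by
    intro h hh
    rw [← hcoe]
    exact (hmp.integrable_comp_emb hemb).mpr hh
  have htransEq : ∀ h : EuclideanSpace ℝ (Fin d) → ℝ,
      ∫ x, h (e.symm x) = ∫ y, h y := by
    intro h
    have := hmp.integral_comp hemb h
    exact this
  -- integrability of products over Euclidean space
  have hu1u1 : Integrable (fun y => u₁ y * u₁ y) volume :=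
    aux_memL2_mul_integrable hu₁L2 hu₁L2
  have hu0u1 : Integrable (fun y => u₀ y * u₁ y) volume :=
    aux_memL2_mul_integrable hu₀L2 hu₁L2
  have hDD : ∀ i, Integrable (fun y => D i y * D i y) volume := fun i =>
    aux_memL2_mul_integrable (hgrad i) (hgrad i)
  have hu1D : ∀ i, Integrable (fun y => u₁ y * D i y) volume := fun i =>
    aux_memL2_mul_integrable hu₁L2 (hgrad i)
  -- transported vector field and lower bound function
  set F : Fin d → (Fin d → ℝ) → ℝ := fun i => (fun y => u₁ y * D i y) ∘ ⇑e.symm with hF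
  set Ψ : EuclideanSpace ℝ (Fin d) → ℝ :=
    fun y => (∑ i, D i y * D i y) + (u₁ y * u₁ y - u₀ y * u₁ y)/(d₁*τ) with hΨ
  have hΨint : Integrable Ψ volume := by
    apply Integrable.add
    · exact integrable_finset_sum _ (fun i _ => hDD i)
    · exact (hu1u1.sub hu0u1).div_const _
  have hfd : ∀ (h : EuclideanSpace ℝ (Fin d) → ℝ) (x : Fin d → ℝ) (i : Fin d),
      fderiv ℝ (h ∘ ⇑e.symm) x (Pi.single i 1)
        = fderiv ℝ h (e.symm x) (EuclideanSpace.single i 1) := by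
    intro h x i
    rw [ContinuousLinearEquiv.comp_right_fderiv]
    rfl
  have hcd : ∀ i, ContDiff ℝ 1 (F i) := by
    intro i
    exact ((hsmooth.of_le (by norm_num)).mul (hDcd i)).comp e.symm.contDiff
  have hFi : ∀ i, Integrable (F i) volume := fun i => htransInt _ (hu1D i)
  have hleF : ∀ x : Fin d → ℝ, (Ψ ∘ ⇑e.symm) x ≤ ∑ i, fderiv ℝ (F i) x (Pi.single i 1) := by
    intro x
    set y := e.symm x with hy
    have hterm : ∀ i, fderiv ℝ (F i) x (Pi.single i 1)
        = D i y * D i y + u₁ y * (fderiv ℝ (D i) y (EuclideanSpace.single i 1)) := by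
      intro i
      rw [hF]
      rw [hfd (fun y => u₁ y * D i y) x i]
      rw [fderiv_fun_mul (hu₁diff y) ((hDcd i).differentiable one_ne_zero y)]
      simp only [ContinuousLinearMap.add_apply, ContinuousLinearMap.smul_apply, smul_eq_mul]
      ring
    have hlap : ∑ i, fderiv ℝ (D i) y (EuclideanSpace.single i 1) = discreteLaplacian u₁ y := rfl
    have hsum : ∑ i, fderiv ℝ (F i) x (Pi.single i 1)
        = (∑ i, D i y * D i y) + u₁ y * discreteLaplacian u₁ y := by
      rw [Finset.sum_congr rfl (fun i _ => hterm i), Finset.sum_add_distrib,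
        ← Finset.mul_sum, hlap]
    rw [hsum]
    have hs := hscheme y
    have hmul : (u₁ y - u₀ y - d₁ * τ * discreteLaplacian u₁ y) * u₁ y
        = (-(τ / ε) * (u₁ y * g y)) * u₁ y := by rw [hs]
    have hnn : 0 ≤ (τ / ε) * (g y * (u₁ y * u₁ y)) :=
      mul_nonneg (div_nonneg hτ.le hε.le) (mul_nonneg (hg y) (mul_self_nonneg _))
    have hkeypt : u₁ y * u₁ y - u₀ y * u₁ y ≤ (d₁*τ) * (u₁ y * discreteLaplacian u₁ y) := by
      nlinarith [hmul, hnn]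
    have hdiv : (u₁ y * u₁ y - u₀ y * u₁ y)/(d₁*τ) ≤ u₁ y * discreteLaplacian u₁ y := by
      rw [div_le_iff₀ (by positivity)]
      linarith [hkeypt]
    simp only [Function.comp_apply, hΨ, ← hy]
    linarith [hdiv]
  have hcore := core_div F (Ψ ∘ ⇑e.symm) hcd hFi (htransInt _ hΨint) hleF
  -- transfer the integral inequality back
  rw [show ∫ x, (Ψ ∘ ⇑e.symm) x = ∫ x, Ψ (e.symm x) from rfl, htransEq Ψ] at hcore
  have hΨsplit : ∫ y, Ψ y
      = (∫ y, ∑ i, D i y * D i y) + (∫ y, (u₁ y * u₁ y - u₀ y * u₁ y))/(d₁*τ) := by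
    have hA : Integrable (fun y : EuclideanSpace ℝ (Fin d) => ∑ i, D i y * D i y) volume :=
      integrable_finset_sum _ (fun i _ => hDD i)
    have hB : Integrable
        (fun y : EuclideanSpace ℝ (Fin d) => (u₁ y * u₁ y - u₀ y * u₁ y)/(d₁*τ)) volume := by
      have := (hu1u1.sub hu0u1).div_const (d₁*τ)
      exact this
    rw [hΨ]
    rw [integral_add hA hB]
    congr 1
    rw [← integral_div]
  have hsq : 0 ≤ ∫ y, ∑ i, D i y * D i y :=
    integral_nonneg (fun y => Finset.sum_nonneg (fun i _ => mul_self_nonneg _))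
  have hsub : ∫ y, (u₁ y * u₁ y - u₀ y * u₁ y)
      = (∫ y, u₁ y * u₁ y) - ∫ y, u₀ y * u₁ y := integral_sub hu1u1 hu0u1
  have hkey2 : ∫ y, u₁ y * u₁ y ≤ ∫ y, u₀ y * u₁ y := by
    rw [hΨsplit, hsub] at hcore
    have hpos : (0:ℝ) < d₁ * τ := by positivity
    have h3 : ((∫ y, u₁ y * u₁ y) - ∫ y, u₀ y * u₁ y)/(d₁*τ) ≤ 0 := by linarith
    rcases div_nonpos_iff.mp h3 with ⟨h5, h6⟩ | ⟨h5, h6⟩ <;> linarith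
  -- L² norms via Lp space
  set f₀ := hu₀L2.toLp u₀ with hf₀
  set f₁ := hu₁L2.toLp u₁ with hf₁
  have hinner0 : (inner ℝ f₀ f₁ : ℝ) = ∫ y, u₀ y * u₁ y := by
    rw [L2.inner_def]
    apply integral_congr_ae
    filter_upwards [hu₀L2.coeFn_toLp, hu₁L2.coeFn_toLp] with y h0 h1
    simp [h0, h1, RCLike.inner_apply, hf₀, hf₁, mul_comm]
  have hinner1 : (inner ℝ f₁ f₁ : ℝ) = ∫ y, u₁ y * u₁ y := by
    rw [L2.inner_def]
    apply integral_congr_ae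
    filter_upwards [hu₁L2.coeFn_toLp] with y h1
    simp [h1, RCLike.inner_apply, hf₁, sq]
  have hn1 : ‖f₁‖ * ‖f₁‖ ≤ ‖f₀‖ * ‖f₁‖ := by
    have h1 : ‖f₁‖ * ‖f₁‖ = (inner ℝ f₁ f₁ : ℝ) := (real_inner_self_eq_norm_mul_norm f₁).symm
    have h2 : (inner ℝ f₀ f₁ : ℝ) ≤ ‖f₀‖ * ‖f₁‖ := real_inner_le_norm f₀ f₁
    rw [h1, hinner1]
    calc ∫ y, u₁ y * u₁ y ≤ ∫ y, u₀ y * u₁ y := hkey2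
      _ = (inner ℝ f₀ f₁ : ℝ) := hinner0.symm
      _ ≤ ‖f₀‖ * ‖f₁‖ := h2
  have hn2 : ‖f₁‖ ≤ ‖f₀‖ := by
    nlinarith [hn1, norm_nonneg f₀, norm_nonneg f₁]
  rw [hf₀, hf₁, Lp.norm_toLp, Lp.norm_toLp] at hn2
  exact (ENNReal.toReal_le_toReal hu₁L2.2.ne hu₀L2.2.ne).mp hn2
end

section
/- Let (u_j^n) satisfy the one-dimensional fully discrete semi-implicit scheme with homogeneous Dirichlet boundary conditions u_0^{n+1} = u_N^{n+1} = 0, nonnegative reaction coefficients, i.e. c_j := 1 + (τ/ε)(v_j^n + λ(1-p_j^{n+1})) ≥ 1, and [c_j + 2d₁τ/h²]u_j^{n+1} - (d₁τ/h²)(u_{j+1}^{n+1}+u_{j-1}^{n+1}) = u_j^n. Then the discrete L² norm ‖U^{n+1}‖₂² = h·Σ_j (u_j^{n+1})² satisfies ‖U^{n+1}‖₂ ≤ ‖U^n‖₂. -/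
lemma shift_up_aux (u : ℕ → ℝ) (N : ℕ) (hN : 1 ≤ N) (hB : u N = 0) :
    ∑ j ∈ Finset.Ico 1 N, u (j + 1) ^ 2 ≤ ∑ j ∈ Finset.Ico 1 N, u j ^ 2 := by
  rw [Finset.sum_Ico_eq_sum_range, Finset.sum_Ico_eq_sum_range]
  obtain ⟨n, rfl⟩ : ∃ n, N = n + 1 := ⟨N - 1, by omega⟩
  simp only [Nat.add_sub_cancel]
  have e1 : ∑ i ∈ Finset.range (n + 1), u (i + 1) ^ 2
      = ∑ i ∈ Finset.range n, u (1 + i + 1) ^ 2 + u 1 ^ 2 := by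
    rw [Finset.sum_range_succ']
    simp only [show ∀ i, i + 1 + 1 = 1 + i + 1 from fun i => by omega]
  have e2 : ∑ i ∈ Finset.range (n + 1), u (i + 1) ^ 2
      = ∑ i ∈ Finset.range n, u (1 + i) ^ 2 + u (n + 1) ^ 2 := by
    rw [Finset.sum_range_succ]
    simp only [show ∀ i, i + 1 = 1 + i from fun i => by omega]
  have := sq_nonneg (u 1)
  rw [hB] at e2
  nlinarith [e1, e2]

lemma shift_down_aux (u : ℕ → ℝ) (N : ℕ) (hN : 1 ≤ N) (hB : u 0 = 0) :
    ∑ j ∈ Finset.Ico 1 N, u (j - 1) ^ 2 ≤ ∑ j ∈ Finset.Ico 1 N, u j ^ 2 := by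
  rw [Finset.sum_Ico_eq_sum_range, Finset.sum_Ico_eq_sum_range]
  simp only [show ∀ i : ℕ, 1 + i - 1 = i from fun i => by omega]
  rcases Nat.eq_zero_or_pos (N - 1) with h0 | hpos
  · simp [h0]
  obtain ⟨m, hm⟩ : ∃ m, N - 1 = m + 1 := ⟨N - 1 - 1, by omega⟩
  rw [hm, Finset.sum_range_succ', Finset.sum_range_succ, hB]
  have := sq_nonneg (u (1 + (m + 0)))
  simp only [show ∀ i : ℕ, 1 + i = i + 1 from fun i => by omega]
  nlinarith [sq_nonneg (u (m + 1 + 1))]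

theorem stmt_16 (N : ℕ) (hN : 2 ≤ N) (τ ε lam d₁ h : ℝ)
    (hτ : 0 < τ) (hε : 0 < ε) (hlam : 0 < lam) (hd₁ : 0 < d₁) (hh : 0 < h)
    (uprev unext v p : ℕ → ℝ)
    (hc : ∀ j, 1 ≤ j → j ≤ N - 1 → 1 ≤ 1 + (τ / ε) * (v j + lam * (1 - p j)))
    (hb0 : unext 0 = 0) (hbN : unext N = 0)
    (hscheme : ∀ j, 1 ≤ j → j ≤ N - 1 →
      (1 + (τ / ε) * (v j + lam * (1 - p j)) + 2 * d₁ * τ / h ^ 2) * unext j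
        - (d₁ * τ / h ^ 2) * (unext (j + 1) + unext (j - 1)) = uprev j) :
    Real.sqrt (h * ∑ j ∈ Finset.Ico 1 N, (unext j) ^ 2)
      ≤ Real.sqrt (h * ∑ j ∈ Finset.Ico 1 N, (uprev j) ^ 2) := by
  set S := Finset.Ico 1 N with hS
  set A := ∑ j ∈ S, (unext j) ^ 2 with hA
  set B := ∑ j ∈ S, (uprev j) ^ 2 with hB
  have hA0 : 0 ≤ A := Finset.sum_nonneg fun j _ => sq_nonneg _
  have hB0 : 0 ≤ B := Finset.sum_nonneg fun j _ => sq_nonneg _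
  have hμ : 0 ≤ d₁ * τ / h ^ 2 := by positivity
  set μ := d₁ * τ / h ^ 2 with hμdef
  -- sum of cross terms
  have hup : ∑ j ∈ S, unext j * unext (j + 1) ≤ A := by
    have h1 : ∀ j ∈ S, unext j * unext (j + 1) ≤ (unext j ^ 2 + unext (j + 1) ^ 2) / 2 :=
      fun j _ => by nlinarith [sq_nonneg (unext j - unext (j + 1))]
    calc ∑ j ∈ S, unext j * unext (j + 1)
        ≤ ∑ j ∈ S, (unext j ^ 2 + unext (j + 1) ^ 2) / 2 := Finset.sum_le_sum h1
      _ = (∑ j ∈ S, unext j ^ 2 + ∑ j ∈ S, unext (j + 1) ^ 2) / 2 := by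
          rw [← Finset.sum_add_distrib, ← Finset.sum_div]
      _ ≤ (A + A) / 2 := by
          have := shift_up_aux unext N (by omega) hbN
          rw [← hS] at this; linarith
      _ = A := by ring
  have hdown : ∑ j ∈ S, unext j * unext (j - 1) ≤ A := by
    have h1 : ∀ j ∈ S, unext j * unext (j - 1) ≤ (unext j ^ 2 + unext (j - 1) ^ 2) / 2 :=
      fun j _ => by nlinarith [sq_nonneg (unext j - unext (j - 1))]
    calc ∑ j ∈ S, unext j * unext (j - 1)
        ≤ ∑ j ∈ S, (unext j ^ 2 + unext (j - 1) ^ 2) / 2 := Finset.sum_le_sum h1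
      _ = (∑ j ∈ S, unext j ^ 2 + ∑ j ∈ S, unext (j - 1) ^ 2) / 2 := by
          rw [← Finset.sum_add_distrib, ← Finset.sum_div]
      _ ≤ (A + A) / 2 := by
          have := shift_down_aux unext N (by omega) hb0
          rw [← hS] at this; linarith
      _ = A := by ring
  -- main energy inequality
  have key : A ≤ ∑ j ∈ S, unext j * uprev j := by
    have hterm : ∀ j ∈ S, unext j * uprev j =
        (1 + (τ / ε) * (v j + lam * (1 - p j))) * unext j ^ 2
          + 2 * μ * unext j ^ 2
          - μ * (unext j * unext (j + 1)) - μ * (unext j * unext (j - 1)) := by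
      intro j hj
      rw [Finset.mem_Ico] at hj
      have h1 : 1 ≤ j := hj.1
      have h2 : j ≤ N - 1 := by omega
      have := hscheme j h1 h2
      rw [← this, hμdef]
      ring
    rw [Finset.sum_congr rfl hterm]
    have hcs : A ≤ ∑ j ∈ S, (1 + (τ / ε) * (v j + lam * (1 - p j))) * unext j ^ 2 := by
      apply Finset.sum_le_sum
      intro j hj
      rw [Finset.mem_Ico] at hj
      have := hc j hj.1 (by omega)
      nlinarith [sq_nonneg (unext j)]
    simp only [Finset.sum_sub_distrib, Finset.sum_add_distrib, ← Finset.mul_sum]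
    nlinarith [mul_le_mul_of_nonneg_left hup hμ, mul_le_mul_of_nonneg_left hdown hμ]
  -- Cauchy-Schwarz
  have hcs2 : (∑ j ∈ S, unext j * uprev j) ^ 2 ≤ A * B := by
    exact Finset.sum_mul_sq_le_sq_mul_sq S unext uprev
  have hAB : A ≤ B := by
    have h1 : A ≤ Real.sqrt A * Real.sqrt B := by
      have h2 : ∑ j ∈ S, unext j * uprev j ≤ Real.sqrt (A * B) := by
        calc ∑ j ∈ S, unext j * uprev j ≤ |∑ j ∈ S, unext j * uprev j| := le_abs_self _
          _ = Real.sqrt ((∑ j ∈ S, unext j * uprev j) ^ 2) := (Real.sqrt_sq_eq_abs _).symm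
          _ ≤ Real.sqrt (A * B) := Real.sqrt_le_sqrt hcs2
      rw [Real.sqrt_mul hA0] at h2
      linarith
    nlinarith [Real.sq_sqrt hA0, Real.sq_sqrt hB0, Real.sqrt_nonneg A, Real.sqrt_nonneg B,
      sq_nonneg (Real.sqrt A - Real.sqrt B)]
  apply Real.sqrt_le_sqrt
  nlinarith
end
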